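/- Let ν ∈ (−1,∞)^d. The measure μ_ν on (0,∞)^d with density x₁^{2ν₁+1}···x_d^{2ν_d+1} dx is doubling with respect to the Euclidean metric: there exists C > 0 such that μ_ν(B(x,2r)) ≤ C·μ_ν(B(x,r)) for all x ∈ (0,∞)^d and r > 0. -/

import Mathlib

open MeasureTheory Set

/-- The measure on the positive orthant of `ℝ^d` with density `∏ x_i^(2ν_i+1) dx`. -/
noncomputable def besselMeasureD (d : ℕ) (ν : Fin d → ℝ) :
    Measure (EuclideanSpace ℝ (Fin d)) :=
  (volume.restrict {x : EuclideanSpace ℝ (Fin d) | ∀ i, 0 < x i}).withDensity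
    fun x => ENNReal.ofReal (∏ i, (x i) ^ (2 * ν i + 1))

/-!
Balls are squeezed between coordinate cubes, `ball x (2r) ⊆ Q(x, 2r)` and
`Q(x, r / (√d + 1)) ⊆ ball x r`, and on cubes the measure factorises into one-dimensional masses
`∫_{(t-s, t+s) ∩ (0,∞)} u^c du = ((t+s)^β - (t-s)₊^β) / β` with `β = c + 1 > 0`.
By Bernoulli's inequality `w^β - v^β ≍ (w - v) w^(β-1)` for `0 ≤ v ≤ w`, so the mass is
comparable to `s (t+s)^c`, which grows by at most `A^(1+|c|)` when `s` is replaced by `A s`.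
-/

open Metric

namespace BesselDoubling

section Bernoulli

variable {β ρ v w : ℝ}

lemma one_sub_rpow_le_max_mul (hρ₀ : 0 ≤ ρ) (hρ₁ : ρ ≤ 1) :
    1 - ρ ^ β ≤ max 1 β * (1 - ρ) := by
  rcases le_total 1 β with hβ | hβ
  · have := one_add_mul_self_le_rpow_one_add (by linarith : -1 ≤ ρ - 1) hβ
    rw [add_sub_cancel] at this
    nlinarith [le_max_right 1 β]
  · have := Real.self_le_rpow_of_le_one hρ₀ hρ₁ hβ
    nlinarith [le_max_left 1 β]

lemma min_mul_le_one_sub_rpow (hβ : 0 ≤ β) (hρ₀ : 0 ≤ ρ) (hρ₁ : ρ ≤ 1) :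
    min 1 β * (1 - ρ) ≤ 1 - ρ ^ β := by
  rcases le_total 1 β with hβ₁ | hβ₁
  · have := Real.rpow_le_self_of_le_one hρ₀ hρ₁ hβ₁
    nlinarith [min_le_left 1 β]
  · have := rpow_one_add_le_one_add_mul_self (by linarith : -1 ≤ ρ - 1) hβ hβ₁
    rw [add_sub_cancel] at this
    nlinarith [min_le_right 1 β]

lemma rpow_sub_rpow_eq_mul_one_sub (hv : 0 ≤ v) (hw : 0 < w) :
    w ^ β - v ^ β = w ^ β * (1 - (v / w) ^ β) := by
  rw [Real.div_rpow hv hw.le, mul_sub, mul_div_cancel₀ _ (Real.rpow_pos_of_pos hw β).ne',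
    mul_one]

lemma sub_mul_rpow_sub_one (hw : 0 < w) : (w - v) * w ^ (β - 1) = w ^ β * (1 - v / w) := by
  rw [Real.rpow_sub_one hw.ne']
  field_simp

lemma rpow_sub_rpow_le_max_mul (hv : 0 ≤ v) (hvw : v ≤ w) (hw : 0 < w) :
    w ^ β - v ^ β ≤ max 1 β * (w - v) * w ^ (β - 1) := by
  have hρ :=
    one_sub_rpow_le_max_mul (β := β) (div_nonneg hv hw.le) (div_le_one_of_le₀ hvw hw.le)
  rw [rpow_sub_rpow_eq_mul_one_sub hv hw, mul_assoc, sub_mul_rpow_sub_one hw, mul_left_comm]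
  exact mul_le_mul_of_nonneg_left hρ (Real.rpow_nonneg hw.le β)

lemma min_mul_le_rpow_sub_rpow (hβ : 0 ≤ β) (hv : 0 ≤ v) (hvw : v ≤ w) (hw : 0 < w) :
    min 1 β * (w - v) * w ^ (β - 1) ≤ w ^ β - v ^ β := by
  have hρ := min_mul_le_one_sub_rpow hβ (div_nonneg hv hw.le) (div_le_one_of_le₀ hvw hw.le)
  rw [rpow_sub_rpow_eq_mul_one_sub hv hw, mul_assoc, sub_mul_rpow_sub_one hw, mul_left_comm]
  exact mul_le_mul_of_nonneg_left hρ (Real.rpow_nonneg hw.le β)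

end Bernoulli

section IntervalMass

variable {β c t s : ℝ}

lemma add_rpow_sub_max_rpow_le (ht : 0 ≤ t) (hs : 0 < s) :
    (t + s) ^ β - max (t - s) 0 ^ β ≤ max 1 β * (2 * s) * (t + s) ^ (β - 1) := by
  refine (rpow_sub_rpow_le_max_mul (le_max_right _ _) (max_le (by linarith) (by linarith))
    (by linarith)).trans ?_
  gcongr
  linarith [le_max_left (t - s) 0]

lemma min_mul_le_add_rpow_sub_max_rpow (hβ : 0 ≤ β) (ht : 0 ≤ t) (hs : 0 < s) :
    min 1 β * s * (t + s) ^ (β - 1) ≤ (t + s) ^ β - max (t - s) 0 ^ β := by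
  refine le_trans ?_ (min_mul_le_rpow_sub_rpow hβ (le_max_right _ _)
    (max_le (by linarith) (by linarith)) (by linarith))
  gcongr
  linarith [max_le (by linarith : t - s ≤ t) ht]

lemma rpow_le_rpow_abs_mul_rpow {a b A : ℝ} (ha : 0 < a) (hab : a ≤ b) (hbA : b ≤ A * a) :
    b ^ c ≤ A ^ |c| * a ^ c := by
  have hA : 1 ≤ A := by nlinarith
  rcases le_total 0 c with hc | hc
  · rw [abs_of_nonneg hc, ← Real.mul_rpow (by linarith) ha.le]
    exact Real.rpow_le_rpow (by linarith) hbA hc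
  · calc b ^ c ≤ a ^ c := Real.rpow_le_rpow_of_nonpos ha hab hc
      _ ≤ A ^ |c| * a ^ c :=
        le_mul_of_one_le_left (Real.rpow_nonneg ha.le c) (Real.one_le_rpow hA (abs_nonneg c))

lemma integrableOn_rpow_ball_inter_Ioi (hc : -1 < c) (t s : ℝ) :
    IntegrableOn (fun u => u ^ c) (ball t s ∩ Ioi 0) :=
  (intervalIntegral.intervalIntegrable_rpow' hc).1.mono_set <| by
    rw [Real.ball_eq_Ioo]
    exact inter_subset_left.trans Ioo_subset_Ioc_self

lemma integral_rpow_ball_inter_Ioi (hc : -1 < c) (ht : 0 ≤ t) (hs : 0 ≤ s) :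
    ∫ u in ball t s ∩ Ioi 0, u ^ c =
      ((t + s) ^ (c + 1) - max (t - s) 0 ^ (c + 1)) / (c + 1) := by
  have hle : max (t - s) 0 ≤ t + s := max_le (by linarith) (by linarith)
  rw [Real.ball_eq_Ioo, Ioo_inter_Ioi, ← integral_Ioc_eq_integral_Ioo,
    ← intervalIntegral.integral_of_le hle, integral_rpow (Or.inl hc)]

lemma exists_integral_rpow_ball_inter_Ioi_mul_le {A : ℝ} (hc : -1 < c) (hA : 1 ≤ A) :
    ∃ K, 0 < K ∧ ∀ t s : ℝ, 0 < t → 0 < s →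
      ∫ u in ball t (A * s) ∩ Ioi 0, u ^ c ≤ K * ∫ u in ball t s ∩ Ioi 0, u ^ c := by
  have hβ : 0 < c + 1 := by linarith
  refine ⟨2 * A * A ^ |c| * max 1 (c + 1) / min 1 (c + 1), by positivity, fun t s ht hs => ?_⟩
  have hAs : 0 < A * s := by positivity
  have upper := add_rpow_sub_max_rpow_le (β := c + 1) ht.le hAs
  have lower := min_mul_le_add_rpow_sub_max_rpow hβ.le ht.le hs
  have growth : (t + A * s) ^ c ≤ A ^ |c| * (t + s) ^ c :=
    rpow_le_rpow_abs_mul_rpow (by linarith) (by nlinarith) (by nlinarith)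
  rw [add_sub_cancel_right] at upper lower
  rw [integral_rpow_ball_inter_Ioi hc ht.le hAs.le, integral_rpow_ball_inter_Ioi hc ht.le hs.le,
    ← mul_div_assoc]
  gcongr
  calc _ ≤ max 1 (c + 1) * (2 * (A * s)) * (t + A * s) ^ c := upper
    _ ≤ max 1 (c + 1) * (2 * (A * s)) * (A ^ |c| * (t + s) ^ c) := by gcongr
    _ = 2 * A * A ^ |c| * max 1 (c + 1) / min 1 (c + 1) * (min 1 (c + 1) * s * (t + s) ^ c) := by
        field_simp
    _ ≤ _ := by gcongr

end IntervalMass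

section Pi

variable {ι : Type*} [Fintype ι]

lemma indicator_univ_pi_prod {α : ι → Type*} {M : Type*} [CommMonoidWithZero M]
    (t : ∀ i, Set (α i)) (f : ∀ i, α i → M) (z : ∀ i, α i) :
    (univ.pi t).indicator (fun z => ∏ i, f i (z i)) z = ∏ i, (t i).indicator (f i) (z i) := by
  by_cases hz : z ∈ univ.pi t
  · rw [indicator_of_mem hz]
    exact Finset.prod_congr rfl fun i _ => (indicator_of_mem (hz i (mem_univ i)) _).symm
  · obtain ⟨i, -, hi⟩ := not_forall₂.mp hz
    rw [indicator_of_notMem hz, Finset.prod_eq_zero (Finset.mem_univ i) (indicator_of_notMem hi _)]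

variable {E : ι → Type*} [∀ i, MeasurableSpace (E i)] {μ : ∀ i, Measure (E i)}
  [∀ i, SigmaFinite (μ i)] {f : ∀ i, E i → ℝ} {t : ∀ i, Set (E i)}

lemma integrableOn_univ_pi_prod (ht : ∀ i, MeasurableSet (t i))
    (hf : ∀ i, IntegrableOn (f i) (t i) (μ i)) :
    IntegrableOn (fun z => ∏ i, f i (z i)) (univ.pi t) (Measure.pi μ) := by
  rw [← integrable_indicator_iff (MeasurableSet.univ_pi ht), funext (indicator_univ_pi_prod t f)]
  exact Integrable.fintype_prod_dep fun i => (integrable_indicator_iff (ht i)).2 (hf i)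

lemma setIntegral_univ_pi_prod (ht : ∀ i, MeasurableSet (t i)) :
    ∫ z in univ.pi t, ∏ i, f i (z i) ∂Measure.pi μ = ∏ i, ∫ u in t i, f i u ∂μ i := by
  rw [← integral_indicator (MeasurableSet.univ_pi ht), funext (indicator_univ_pi_prod t f),
    integral_fintype_prod_eq_prod]
  exact Finset.prod_congr rfl fun i _ => integral_indicator (ht i)

end Pi

lemma besselMeasureD_setOf_forall_mem {d : ℕ} (ν : Fin d → ℝ) {s : Fin d → Set ℝ}
    (hs : ∀ i, MeasurableSet (s i))
    (hint : ∀ i, IntegrableOn (fun u => u ^ (2 * ν i + 1)) (s i ∩ Ioi 0)) :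
    besselMeasureD d ν {y | ∀ i, y i ∈ s i} =
      ENNReal.ofReal (∏ i, ∫ u in s i ∩ Ioi 0, u ^ (2 * ν i + 1)) := by
  have ht : ∀ i, MeasurableSet (s i ∩ Ioi 0) := fun i => (hs i).inter measurableSet_Ioi
  have hbox := MeasurableSet.univ_pi ht
  have horthant : MeasurableSet {y : EuclideanSpace ℝ (Fin d) | ∀ i, 0 < y i} := by
    measurability
  have hset : {y : EuclideanSpace ℝ (Fin d) | ∀ i, y i ∈ s i} ∩ {y | ∀ i, 0 < y i} =
      WithLp.ofLp ⁻¹' univ.pi fun i => s i ∩ Ioi 0 := by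
    ext y
    simp [forall_and]
  have hnonneg : 0 ≤ᵐ[volume.restrict (univ.pi fun i => s i ∩ Ioi 0)]
      fun z : Fin d → ℝ => ∏ i, z i ^ (2 * ν i + 1) :=
    ae_restrict_of_forall_mem hbox fun z hz =>
      Finset.prod_nonneg fun i _ => Real.rpow_nonneg (hz i (mem_univ i)).2.le _
  rw [besselMeasureD, withDensity_apply', Measure.restrict_restrict' horthant, hset,
    (PiLp.volume_preserving_ofLp (Fin d)).setLIntegral_comp_preimage hbox
      (f := fun z => ENNReal.ofReal (∏ i, z i ^ (2 * ν i + 1))) (by fun_prop),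
    volume_pi, ← ofReal_integral_eq_lintegral_ofReal (integrableOn_univ_pi_prod ht hint) hnonneg,
    setIntegral_univ_pi_prod (f := fun i u => u ^ (2 * ν i + 1)) ht]

section Euclidean

variable {ι : Type*} [Fintype ι]

lemma ball_subset_setOf_forall_mem_ball (x : EuclideanSpace ℝ ι) (r : ℝ) :
    ball x r ⊆ {y | ∀ i, y i ∈ ball (x i) r} :=
  fun y hy i => (PiLp.dist_apply_le y x i).trans_lt hy

lemma dist_le_sqrt_card_mul {ρ : ℝ} (hρ : 0 ≤ ρ) {x y : EuclideanSpace ℝ ι}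
    (h : ∀ i, dist (x i) (y i) ≤ ρ) : dist x y ≤ √(Fintype.card ι) * ρ := by
  rw [EuclideanSpace.dist_eq, ← Real.sqrt_sq hρ, ← Real.sqrt_mul (Nat.cast_nonneg _)]
  gcongr
  calc ∑ i, dist (x i) (y i) ^ 2 ≤ ∑ _i : ι, ρ ^ 2 := by gcongr with i; exact h i
    _ = Fintype.card ι * ρ ^ 2 := by simp

lemma setOf_forall_mem_ball_subset_ball {ρ r : ℝ} (hρ : 0 ≤ ρ)
    (hρr : √(Fintype.card ι) * ρ < r) (x : EuclideanSpace ℝ ι) :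
    {y | ∀ i, y i ∈ ball (x i) ρ} ⊆ ball x r :=
  fun _ hy => (dist_le_sqrt_card_mul hρ fun i => (hy i).le).trans_lt hρr

end Euclidean

end BesselDoubling

open BesselDoubling

theorem besselMeasureD_doubling (d : ℕ) (ν : Fin d → ℝ) (hν : ∀ i, -1 < ν i) :
    ∃ C : ℝ, 0 < C ∧ ∀ (x : EuclideanSpace ℝ (Fin d)) (r : ℝ),
      (∀ i, 0 < x i) → 0 < r →
      besselMeasureD d ν (Metric.ball x (2 * r)) ≤
        ENNReal.ofReal C * besselMeasureD d ν (Metric.ball x r) := by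
  have hc : ∀ i, -1 < 2 * ν i + 1 := fun i => by linarith [hν i]
  have hA : 1 ≤ 2 * (√d + 1) := by linarith [Real.sqrt_nonneg d]
  choose K hK hdouble using fun i => exists_integral_rpow_ball_inter_Ioi_mul_le (hc i) hA
  refine ⟨∏ i, K i, Finset.prod_pos fun i _ => hK i, fun x r hx hr => ?_⟩
  set ρ := r / (√d + 1)
  have hρ : 0 < ρ := by positivity
  have hcube (s : ℝ) : besselMeasureD d ν {y | ∀ i, y i ∈ ball (x i) s} =
      ENNReal.ofReal (∏ i, ∫ u in ball (x i) s ∩ Ioi 0, u ^ (2 * ν i + 1)) :=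
    besselMeasureD_setOf_forall_mem ν (fun _ => measurableSet_ball)
      fun i => integrableOn_rpow_ball_inter_Ioi (hc i) _ _
  have hρr : √(Fintype.card (Fin d)) * ρ < r := by
    rw [Fintype.card_fin, mul_div_assoc', div_lt_iff₀ (by positivity)]
    linarith
  calc besselMeasureD d ν (ball x (2 * r))
      ≤ besselMeasureD d ν {y | ∀ i, y i ∈ ball (x i) (2 * (√d + 1) * ρ)} := by
        refine measure_mono ((ball_subset_setOf_forall_mem_ball x _).trans_eq ?_)
        rw [mul_assoc, mul_div_cancel₀ _ (by positivity)]
    _ ≤ ENNReal.ofReal (∏ i, (K i * ∫ u in ball (x i) ρ ∩ Ioi 0, u ^ (2 * ν i + 1))) := by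
        rw [hcube]
        refine ENNReal.ofReal_le_ofReal (Finset.prod_le_prod (fun i _ => ?_)
          fun i _ => hdouble i _ _ (hx i) hρ)
        exact setIntegral_nonneg (measurableSet_ball.inter measurableSet_Ioi)
          fun u hu => Real.rpow_nonneg hu.2.le _
    _ ≤ ENNReal.ofReal (∏ i, K i) * besselMeasureD d ν (ball x r) := by
        rw [Finset.prod_mul_distrib, ENNReal.ofReal_mul (Finset.prod_nonneg fun i _ => (hK i).le),
          ← hcube]
        exact mul_le_mul_of_nonneg_left
          (measure_mono (setOf_forall_mem_ball_subset_ball hρ.le hρr x)) zero_le
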